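/- Let σ be an n-simplex with vertices v₀,…,v_n and let σ' be obtained by moving each vertex by distance at most ε·diam(σ). If σ has fatness ≥ φ₀, then there exists ε₀ = ε₀(n, φ₀) > 0 such that for all ε ≤ ε₀, σ' is nondegenerate and has fatness ≥ φ₀/2. -/

import Mathlib

open Metric MeasureTheory

/-- The fatness of a simplex given by its ordered tuple of vertices
`v : Fin (k+1) → ℝⁿ`: the infimum, over all faces (nonempty subsets of the index set),
of `Vol(σ)/diam(σ)^(dim σ)`, with the convention that 0-dimensional faces have volume 1. -/
noncomputable def tupleFatness {n k : ℕ} (v : Fin (k + 1) → EuclideanSpace ℝ (Fin n)) : ℝ :=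
  ⨅ s : {s : Finset (Fin (k + 1)) // s.Nonempty},
    if s.1.card = 1 then 1
    else (μH[((s.1.card : ℝ) - 1)] (convexHull ℝ (v '' (s.1 : Set (Fin (k + 1)))))).toReal /
      Metric.diam (v '' (s.1 : Set (Fin (k + 1)))) ^ (s.1.card - 1)

open Metric MeasureTheory Module Submodule Finset
open scoped ENNReal Matrix Pointwise

noncomputable def gramMat {n m : ℕ} (w : Fin (m + 1) → EuclideanSpace ℝ (Fin n)) :
    Matrix (Fin m) (Fin m) ℝ :=
  fun i j => (inner ℝ (w i.succ - w 0) (w j.succ - w 0) : ℝ)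

noncomputable def stdTuple (m : ℕ) : Fin (m + 1) → EuclideanSpace ℝ (Fin m) := fun i =>
  if h : i = 0 then 0 else EuclideanSpace.single (i.pred h) 1

noncomputable def simplexC (m : ℕ) : ℝ≥0∞ :=
  μH[(m : ℝ)] (convexHull ℝ (Set.range (stdTuple m)))

lemma exists_superset_finrank_eq {E : Type*} [NormedAddCommGroup E] [InnerProductSpace ℝ E]
    [FiniteDimensional ℝ E] (N : Submodule ℝ E) (m : ℕ) (h1 : finrank ℝ N ≤ m)
    (h2 : m ≤ finrank ℝ E) : ∃ S : Submodule ℝ E, N ≤ S ∧ finrank ℝ S = m := by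
  obtain ⟨f, hf⟩ := exists_linearIndependent_of_le_finrank
    (n := m - finrank ℝ N) (R := ℝ) (M := Nᗮ)
    (by
      have := Submodule.finrank_add_finrank_orthogonal (K := N)
      omega)
  have hf' : LinearIndependent ℝ ((Nᗮ.subtype) ∘ f) := hf.map' _ (Submodule.ker_subtype _)
  refine ⟨N ⊔ Submodule.span ℝ (Set.range (Nᗮ.subtype ∘ f)), le_sup_left, ?_⟩
  have hspan : Submodule.span ℝ (Set.range (Nᗮ.subtype ∘ f)) ≤ Nᗮ := by
    rw [Submodule.span_le]
    rintro x ⟨i, rfl⟩; exact (f i).2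
  have hinf : N ⊓ Submodule.span ℝ (Set.range (Nᗮ.subtype ∘ f)) = ⊥ := by
    rw [eq_bot_iff, ← N.inf_orthogonal_eq_bot]
    exact inf_le_inf le_rfl hspan
  have := Submodule.finrank_sup_add_finrank_inf_eq N (Submodule.span ℝ (Set.range (Nᗮ.subtype ∘ f)))
  rw [hinf] at this
  have hrank : finrank ℝ (Submodule.span ℝ (Set.range (Nᗮ.subtype ∘ f))) = m - finrank ℝ N :=
    by rw [finrank_span_eq_card hf', Fintype.card_fin]
  simp only [Submodule.coe_subtype, finrank_bot, add_zero] at this hrank ⊢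
  omega

lemma gram_factor {n m : ℕ} (hmn : m ≤ n) (w : Fin (m + 1) → EuclideanSpace ℝ (Fin n)) :
    ∃ B : Matrix (Fin m) (Fin m) ℝ, gramMat w = Bᵀ * B ∧
      μH[(m : ℝ)] (convexHull ℝ (Set.range w)) = ENNReal.ofReal |B.det| * simplexC m := by
  classical
  haveI : (μH[(m : ℝ)] : Measure (EuclideanSpace ℝ (Fin m))).IsAddHaarMeasure := by
    have h : ((finrank ℝ (EuclideanSpace ℝ (Fin m)) : ℕ) : ℝ) = (m : ℝ) := by
      rw [finrank_euclideanSpace_fin]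
    exact h ▸ MeasureTheory.isAddHaarMeasure_hausdorffMeasure
  set u : Fin m → EuclideanSpace ℝ (Fin n) := fun i => w i.succ - w 0 with hu
  have hfr : finrank ℝ (Submodule.span ℝ (Set.range u)) ≤ m := by
    simpa [Set.finrank] using finrank_range_le_card (R := ℝ) u
  obtain ⟨S, hNS, hS⟩ := exists_superset_finrank_eq (Submodule.span ℝ (Set.range u)) m
    (hfr) (by rw [finrank_euclideanSpace_fin]; exact hmn)
  have humem : ∀ i, u i ∈ S := fun i => hNS (Submodule.subset_span ⟨i, rfl⟩)
  set ob : OrthonormalBasis (Fin m) ℝ S := (stdOrthonormalBasis ℝ S).reindex (finCongr hS)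
  set b : Basis (Fin m) ℝ (EuclideanSpace ℝ (Fin m)) := (EuclideanSpace.basisFun (Fin m) ℝ).toBasis
  set M : Matrix (Fin m) (Fin m) ℝ := fun r i => ob.repr ⟨u i, humem i⟩ r with hM
  set A : EuclideanSpace ℝ (Fin m) →ₗ[ℝ] EuclideanSpace ℝ (Fin m) := Matrix.toLin b b M with hA
  set J : EuclideanSpace ℝ (Fin m) →ₗᵢ[ℝ] EuclideanSpace ℝ (Fin n) :=
    S.subtypeₗᵢ.comp ob.repr.symm.toLinearIsometry with hJ
  have hJA : ∀ i, J (A (b i)) = u i := by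
    intro i
    have h1 : A (b i) = ob.repr ⟨u i, humem i⟩ := by
      rw [hA, Matrix.toLin_self]
      ext r
      rw [WithLp.ofLp_sum, Finset.sum_apply]
      simp [b, EuclideanSpace.basisFun_apply, EuclideanSpace.single_apply]
      rfl
    rw [h1]
    simp [hJ]
  have hgram : gramMat w = Mᵀ * M := by
    ext i j
    have h2 : gramMat w i j = (inner ℝ (u i) (u j) : ℝ) := rfl
    have h3 : (inner ℝ (u i) (u j) : ℝ) =
        (inner ℝ ((⟨u i, humem i⟩ : S)) (⟨u j, humem j⟩ : S) : ℝ) := rfl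
    have h4 : (inner ℝ ((⟨u i, humem i⟩ : S)) (⟨u j, humem j⟩ : S) : ℝ)
        = (inner ℝ (ob.repr ⟨u i, humem i⟩) (ob.repr ⟨u j, humem j⟩) : ℝ) :=
      (ob.repr.inner_map_map _ _).symm
    rw [h2, h3, h4, Matrix.mul_apply]
    simp only [PiLp.inner_apply, RCLike.inner_apply, conj_trivial, Matrix.transpose_apply, M]
    exact Finset.sum_congr rfl fun x _ => mul_comm _ _
  set φ := (AffineEquiv.constVAdd ℝ (EuclideanSpace ℝ (Fin n)) (w 0)).toAffineMap with hφ
  have hφapp : ∀ x, φ x = w 0 + x := fun x => by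
    simp [hφ, AffineEquiv.constVAdd_apply, vadd_eq_add]
  have htuple : (fun i => φ (J (A (stdTuple m i)))) = w := by
    funext i
    rw [hφapp]
    induction i using Fin.cases with
    | zero => simp [stdTuple]
    | succ i =>
      have hs : stdTuple m i.succ = b i := by
        simp [stdTuple, Fin.succ_ne_zero, b, EuclideanSpace.basisFun_apply]
      rw [hs, hJA]
      simp [u]
  have himg : Set.range w = ⇑φ '' (⇑J.toLinearMap '' (⇑A '' (Set.range (stdTuple m)))) := by
    rw [← htuple, Set.image_image, Set.image_image]
    exact Set.range_comp (fun x => φ (J (A x))) (stdTuple m)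
  have htrans : Isometry ⇑φ := Isometry.of_dist_eq fun a c => by
    rw [hφapp, hφapp]; exact dist_add_left (w 0) a c
  have hhull : convexHull ℝ (Set.range w) = ⇑φ ''
      (⇑J.toLinearMap '' (⇑A '' (convexHull ℝ (Set.range (stdTuple m))))) := by
    rw [himg, ← AffineMap.image_convexHull, ← LinearMap.image_convexHull,
      ← LinearMap.image_convexHull]
  refine ⟨M, hgram, ?_⟩
  have hJcoe : ⇑J.toLinearMap = ⇑J := rfl
  rw [hhull, htrans.hausdorffMeasure_image (Or.inl (by positivity)), hJcoe,
    J.isometry.hausdorffMeasure_image (Or.inl (by positivity)),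
    Measure.addHaar_image_linearMap _ A, hA, LinearMap.det_toLin]
  rfl

instance hausdorffHaar (m : ℕ) :
    (μH[(m : ℝ)] : Measure (EuclideanSpace ℝ (Fin m))).IsAddHaarMeasure := by
  have h : ((finrank ℝ (EuclideanSpace ℝ (Fin m)) : ℕ) : ℝ) = (m : ℝ) := by
    rw [finrank_euclideanSpace_fin]
  exact h ▸ MeasureTheory.isAddHaarMeasure_hausdorffMeasure

def succEquiv (m : ℕ) : Fin m ≃ {x : Fin (m + 1) // x ≠ 0} :=
  ⟨fun j => ⟨j.succ, Fin.succ_ne_zero j⟩, fun i => i.1.pred i.2,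
    fun j => by simp, fun i => by ext; simp⟩

lemma stdTuple_affineIndependent (m : ℕ) : AffineIndependent ℝ (stdTuple m) := by
  rw [affineIndependent_iff_linearIndependent_vsub ℝ (stdTuple m) 0]
  rw [← linearIndependent_equiv (succEquiv m)]
  have h2 : (fun i : {x : Fin (m+1) // x ≠ 0} => stdTuple m i -ᵥ stdTuple m 0) ∘ (succEquiv m)
      = fun j : Fin m => (EuclideanSpace.basisFun (Fin m) ℝ).toBasis j := by
    funext j
    simp [stdTuple, Fin.succ_ne_zero, succEquiv, EuclideanSpace.basisFun_apply, Function.comp]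
  rw [h2]
  exact (EuclideanSpace.basisFun (Fin m) ℝ).toBasis.linearIndependent

lemma simplexC_pos (m : ℕ) : 0 < simplexC m := by
  apply MeasureTheory.Measure.measure_pos_of_nonempty_interior
  rw [(convex_convexHull ℝ _).interior_nonempty_iff_affineSpan_eq_top, affineSpan_convexHull]
  apply (stdTuple_affineIndependent m).affineSpan_eq_top_iff_card_eq_finrank_add_one.2
  simp [finrank_euclideanSpace_fin]

lemma simplexC_lt_top (m : ℕ) : simplexC m < ⊤ :=
  ((Set.finite_range (stdTuple m)).isCompact_convexHull ℝ).measure_lt_top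

lemma gramMat_det_nonneg {n m : ℕ} (hmn : m ≤ n) (w : Fin (m + 1) → EuclideanSpace ℝ (Fin n)) :
    0 ≤ (gramMat w).det := by
  obtain ⟨B, hB, -⟩ := gram_factor hmn w
  rw [hB, Matrix.det_mul, Matrix.det_transpose]
  exact mul_self_nonneg _

lemma hausdorff_convexHull_eq {n m : ℕ} (hmn : m ≤ n)
    (w : Fin (m + 1) → EuclideanSpace ℝ (Fin n)) :
    μH[(m : ℝ)] (convexHull ℝ (Set.range w))
      = ENNReal.ofReal (Real.sqrt (gramMat w).det) * simplexC m := by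
  obtain ⟨B, hB, hval⟩ := gram_factor hmn w
  rw [hval, hB, Matrix.det_mul, Matrix.det_transpose, Real.sqrt_mul_self_eq_abs]

lemma affineIndependent_of_gramMat {n m : ℕ} (w : Fin (m + 1) → EuclideanSpace ℝ (Fin n))
    (h : (gramMat w).det ≠ 0) : AffineIndependent ℝ w := by
  rw [affineIndependent_iff_linearIndependent_vsub ℝ w 0]
  rw [← linearIndependent_equiv (succEquiv m)]
  have hcomp : (fun i : {x : Fin (m+1) // x ≠ 0} => w i -ᵥ w 0) ∘ (succEquiv m)
      = fun j : Fin m => w j.succ - w 0 := by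
    funext j; simp [succEquiv]
  rw [hcomp]
  rw [Fintype.linearIndependent_iff]
  intro c hc j
  have hj : (gramMat w).mulVec c = 0 := by
    funext i
    have h5 : (gramMat w).mulVec c i
        = (inner ℝ (w i.succ - w 0) (∑ k, c k • (w k.succ - w 0)) : ℝ) := by
      rw [inner_sum]
      simp only [real_inner_smul_right]
      simp [Matrix.mulVec, dotProduct, gramMat, mul_comm]
    rw [Pi.zero_apply, h5, hc, inner_zero_right]
  have hinj : Function.Injective (gramMat w).mulVec :=
    Matrix.mulVec_injective_iff_isUnit.2 ((Matrix.isUnit_iff_isUnit_det _).2 (isUnit_iff_ne_zero.2 h))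
  have h7 : (gramMat w).mulVec c = (gramMat w).mulVec 0 := by rw [hj, Matrix.mulVec_zero]
  exact congrFun (hinj h7) j

section Diam
open Bornology

lemma diam_image_eq {X Y : Type*} [PseudoMetricSpace X] [MetricSpace Y]
    (f : X → Y) {c : ℝ} (hc : 0 ≤ c) (hf : ∀ x y, dist (f x) (f y) = c * dist x y)
    (t : Set X) (ht : IsBounded t) : diam (f '' t) = c * diam t := by
  rcases eq_or_lt_of_le hc with hc0 | hcpos
  · rw [← hc0, zero_mul]
    apply diam_subsingleton
    rintro _ ⟨x, hx, rfl⟩ _ ⟨y, hy, rfl⟩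
    have := hf x y
    rw [← hc0, zero_mul] at this
    exact dist_le_zero.1 this.le
  · apply le_antisymm
    · apply diam_le_of_forall_dist_le (by positivity)
      rintro _ ⟨x, hx, rfl⟩ _ ⟨y, hy, rfl⟩
      rw [hf]
      exact mul_le_mul_of_nonneg_left (dist_le_diam_of_mem ht hx hy) hc
    · have hb : IsBounded (f '' t) := by
        obtain ⟨C, hC⟩ := Metric.isBounded_iff.1 ht
        apply Metric.isBounded_iff.2 ⟨c * C, ?_⟩
        rintro _ ⟨x, hx, rfl⟩ _ ⟨y, hy, rfl⟩
        rw [hf]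
        exact mul_le_mul_of_nonneg_left (hC hx hy) hc
      rw [← le_div_iff₀' hcpos]
      apply diam_le_of_forall_dist_le (by positivity)
      intro x hx y hy
      rw [le_div_iff₀' hcpos, ← hf]
      exact dist_le_diam_of_mem hb ⟨x, hx, rfl⟩ ⟨y, hy, rfl⟩

lemma diam_image_le_diam_image_add {k n : ℕ} (s : Finset (Fin k))
    (v v' : Fin k → EuclideanSpace ℝ (Fin n)) :
    diam (v '' ↑s) ≤ diam (v' '' ↑s) + 2 * dist v v' := by
  apply diam_le_of_forall_dist_le (by positivity)
  rintro _ ⟨i, hi, rfl⟩ _ ⟨j, hj, rfl⟩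
  have h1 : dist (v i) (v j) ≤ dist (v i) (v' i) + dist (v' i) (v' j) + dist (v' j) (v j) :=
    dist_triangle4 _ _ _ _
  have h2 : dist (v' i) (v' j) ≤ diam (v' '' ↑s) :=
    dist_le_diam_of_mem ((s.finite_toSet.image _).isBounded) ⟨i, hi, rfl⟩ ⟨j, hj, rfl⟩
  have h3 : dist (v i) (v' i) ≤ dist v v' := dist_le_pi_dist v v' i
  have h4 : dist (v' j) (v j) ≤ dist v v' := by rw [dist_comm]; exact dist_le_pi_dist v v' j
  linarith

lemma continuous_diam_image {k n : ℕ} (s : Finset (Fin k)) :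
    Continuous fun v : Fin k → EuclideanSpace ℝ (Fin n) => diam (v '' ↑s) := by
  apply LipschitzWith.continuous (K := 2)
  apply LipschitzWith.of_dist_le_mul
  intro v v'
  rw [Real.dist_eq, abs_sub_le_iff]
  constructor
  · have := diam_image_le_diam_image_add s v v'
    push_cast
    linarith
  · have := diam_image_le_diam_image_add s v' v
    rw [dist_comm] at this
    push_cast
    linarith

end Diam

def faceEnum {k : ℕ} (s : {s : Finset (Fin (k + 1)) // s.Nonempty}) :
    Fin ((s.1.card - 1) + 1) → Fin (k + 1) := fun i =>
  (s.1.orderIsoOfFin ((Nat.succ_pred_eq_of_pos s.2.card_pos).symm) i : Fin (k + 1))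

noncomputable def faceVal {n k : ℕ} (s : {s : Finset (Fin (k + 1)) // s.Nonempty})
    (v : Fin (k + 1) → EuclideanSpace ℝ (Fin n)) : ℝ :=
  if s.1.card = 1 then 1 else
    Real.sqrt ((gramMat (v ∘ faceEnum s)).det) * (simplexC (s.1.card - 1)).toReal
      / diam (v '' ↑s.1) ^ (s.1.card - 1)

lemma range_faceEnum {k : ℕ} (s : {s : Finset (Fin (k + 1)) // s.Nonempty}) :
    Set.range (faceEnum s) = ↑s.1 := by
  have : faceEnum s = Subtype.val ∘
      ⇑(s.1.orderIsoOfFin ((Nat.succ_pred_eq_of_pos s.2.card_pos).symm)) := rfl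
  rw [this, Set.range_comp,
    (s.1.orderIsoOfFin ((Nat.succ_pred_eq_of_pos s.2.card_pos).symm)).surjective.range_eq,
    Set.image_univ, Subtype.range_coe]

instance faceNonempty {k : ℕ} : Nonempty {s : Finset (Fin (k + 1)) // s.Nonempty} :=
  ⟨⟨{0}, Finset.singleton_nonempty 0⟩⟩

lemma card_face_le {k n : ℕ} (hk : k ≤ n) (s : {s : Finset (Fin (k + 1)) // s.Nonempty}) :
    s.1.card - 1 ≤ n := by
  have := Finset.card_le_card (Finset.subset_univ s.1)
  simp only [Finset.card_univ, Fintype.card_fin] at this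
  omega

lemma tupleFatness_eq {n k : ℕ} (hk : k ≤ n) (v : Fin (k + 1) → EuclideanSpace ℝ (Fin n)) :
    tupleFatness v = ⨅ s : {s : Finset (Fin (k + 1)) // s.Nonempty}, faceVal s v := by
  apply iInf_congr
  intro s
  unfold faceVal
  by_cases h1 : s.1.card = 1
  · simp [h1]
  · rw [if_neg h1, if_neg h1]
    have hm : s.1.card = (s.1.card - 1) + 1 := (Nat.succ_pred_eq_of_pos s.2.card_pos).symm
    have hexp : ((s.1.card : ℝ) - 1) = ((s.1.card - 1 : ℕ) : ℝ) := by
      rw [hm]; push_cast; ring_nf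
    have himg : v '' ↑s.1 = Set.range (v ∘ faceEnum s) := by
      rw [Set.range_comp, range_faceEnum]
    rw [hexp, himg, hausdorff_convexHull_eq (card_face_le hk s) (v ∘ faceEnum s),
      ENNReal.toReal_mul, ENNReal.toReal_ofReal (Real.sqrt_nonneg _)]

lemma faceVal_nonneg {n k : ℕ} (s : {s : Finset (Fin (k + 1)) // s.Nonempty})
    (v : Fin (k + 1) → EuclideanSpace ℝ (Fin n)) : 0 ≤ faceVal s v := by
  unfold faceVal
  split
  · norm_num
  · positivity

lemma tupleFatness_le {n k : ℕ} (hk : k ≤ n) (v : Fin (k + 1) → EuclideanSpace ℝ (Fin n))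
    (s : {s : Finset (Fin (k + 1)) // s.Nonempty}) : tupleFatness v ≤ faceVal s v := by
  rw [tupleFatness_eq hk v]
  exact ciInf_le ⟨0, by rintro _ ⟨t, rfl⟩; exact faceVal_nonneg t v⟩ s

lemma le_tupleFatness {n k : ℕ} (hk : k ≤ n) {v : Fin (k + 1) → EuclideanSpace ℝ (Fin n)} {c : ℝ}
    (h : ∀ s, c ≤ faceVal s v) : c ≤ tupleFatness v := by
  rw [tupleFatness_eq hk v]
  exact le_ciInf h

lemma gramMat_scale {n m : ℕ} (w : Fin (m + 1) → EuclideanSpace ℝ (Fin n)) (c : ℝ)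
    (x₀ : EuclideanSpace ℝ (Fin n)) :
    gramMat (fun i => c • (w i - x₀)) = (c ^ 2) • gramMat w := by
  ext i j
  have h1 : ∀ i : Fin (m + 1), c • (w i - x₀) - c • (w 0 - x₀) = c • (w i - w 0) := by
    intro i
    rw [← smul_sub]
    congr 1
    abel
  simp only [gramMat, Matrix.smul_apply, h1, real_inner_smul_left, real_inner_smul_right,
    smul_eq_mul]
  ring

lemma dist_scale {n : ℕ} (c : ℝ) (x₀ x y : EuclideanSpace ℝ (Fin n)) (hc : 0 ≤ c) :
    dist (c • (x - x₀)) (c • (y - x₀)) = c * dist x y := by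
  rw [dist_smul₀, dist_sub_right, Real.norm_eq_abs, abs_of_nonneg hc]

lemma diam_scale {n : ℕ} (c : ℝ) (hc : 0 ≤ c) (x₀ : EuclideanSpace ℝ (Fin n))
    (t : Set (EuclideanSpace ℝ (Fin n))) (ht : Bornology.IsBounded t) :
    diam ((fun x => c • (x - x₀)) '' t) = c * diam t :=
  diam_image_eq _ hc (fun x y => dist_scale c x₀ x y hc) t ht

lemma faceVal_scale {n k : ℕ} (hk : k ≤ n) (s : {s : Finset (Fin (k + 1)) // s.Nonempty})
    (v : Fin (k + 1) → EuclideanSpace ℝ (Fin n)) {c : ℝ} (hc : 0 < c)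
    (x₀ : EuclideanSpace ℝ (Fin n)) :
    faceVal s (fun i => c • (v i - x₀)) = faceVal s v := by
  unfold faceVal
  by_cases h1 : s.1.card = 1
  · simp [h1]
  · rw [if_neg h1, if_neg h1]
    set m := s.1.card - 1 with hm
    have hgram : gramMat ((fun i => c • (v i - x₀)) ∘ faceEnum s)
        = (c ^ 2) • gramMat (v ∘ faceEnum s) := by
      have : (fun i => c • (v i - x₀)) ∘ faceEnum s
          = fun i => c • ((v ∘ faceEnum s) i - x₀) := rfl
      rw [this, gramMat_scale]
    have hdet : (gramMat ((fun i => c • (v i - x₀)) ∘ faceEnum s)).det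
        = (c ^ 2) ^ m * (gramMat (v ∘ faceEnum s)).det := by
      rw [hgram, Matrix.det_smul, Fintype.card_fin]
    have hsqrt : Real.sqrt ((gramMat ((fun i => c • (v i - x₀)) ∘ faceEnum s)).det)
        = c ^ m * Real.sqrt ((gramMat (v ∘ faceEnum s)).det) := by
      rw [hdet, Real.sqrt_mul (by positivity)]
      congr 1
      rw [← pow_mul, mul_comm 2 m, pow_mul]
      exact Real.sqrt_sq (by positivity)
    have hdiam : diam ((fun i => c • (v i - x₀)) '' ↑s.1) = c * diam (v '' ↑s.1) := by
      have himg : (fun i => c • (v i - x₀)) '' ↑s.1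
          = (fun x => c • (x - x₀)) '' (v '' ↑s.1) := by
        rw [Set.image_image]
      rw [himg, diam_scale c hc.le x₀ _ ((s.1.finite_toSet.image v).isBounded)]
    rw [hsqrt, hdiam, mul_pow, mul_assoc, mul_div_mul_left _ _ (pow_ne_zero m hc.ne')]

lemma tupleFatness_scale {n k : ℕ} (hk : k ≤ n) (v : Fin (k + 1) → EuclideanSpace ℝ (Fin n))
    {c : ℝ} (hc : 0 < c) (x₀ : EuclideanSpace ℝ (Fin n)) :
    tupleFatness (fun i => c • (v i - x₀)) = tupleFatness v := by
  rw [tupleFatness_eq hk, tupleFatness_eq hk]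
  exact iInf_congr fun s => faceVal_scale hk s v hc x₀

lemma continuous_sqrtdet {n k : ℕ} (s : {s : Finset (Fin (k + 1)) // s.Nonempty}) :
    Continuous fun v : Fin (k + 1) → EuclideanSpace ℝ (Fin n) =>
      Real.sqrt ((gramMat (v ∘ faceEnum s)).det) := by
  apply Real.continuous_sqrt.comp
  apply Continuous.matrix_det
  apply continuous_matrix
  intro i j
  unfold gramMat
  exact Continuous.inner
    (((continuous_apply _).sub (continuous_apply _)))
    (((continuous_apply _).sub (continuous_apply _)))

lemma image_univ_coe {n k : ℕ} (v : Fin (k + 1) → EuclideanSpace ℝ (Fin n)) :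
    v '' ↑(Finset.univ : Finset (Fin (k + 1))) = Set.range v := by
  rw [Finset.coe_univ, Set.image_univ]

def Kset (n : ℕ) (φ : ℝ) : Set (Fin (n + 1) → EuclideanSpace ℝ (Fin n)) :=
  {v | v 0 = 0 ∧ diam (Set.range v) = 1 ∧
    ∀ s : {s : Finset (Fin (n + 1)) // s.Nonempty}, s.1.card ≠ 1 →
      φ * diam (v '' ↑s.1) ^ (s.1.card - 1)
        ≤ Real.sqrt ((gramMat (v ∘ faceEnum s)).det) * (simplexC (s.1.card - 1)).toReal}

lemma continuous_diam_range {n k : ℕ} :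
    Continuous fun v : Fin (k + 1) → EuclideanSpace ℝ (Fin n) => diam (Set.range v) := by
  have : (fun v : Fin (k + 1) → EuclideanSpace ℝ (Fin n) => diam (Set.range v))
      = fun v => diam (v '' ↑(Finset.univ : Finset (Fin (k + 1)))) := by
    funext v
    rw [image_univ_coe]
  rw [this]
  exact continuous_diam_image _

lemma isClosed_Kset (n : ℕ) (φ : ℝ) : IsClosed (Kset n φ) := by
  have h0 : Kset n φ = {v : Fin (n + 1) → EuclideanSpace ℝ (Fin n) | v 0 = 0}
      ∩ ({v | diam (Set.range v) = 1}
      ∩ ⋂ s : {s : Finset (Fin (n + 1)) // s.Nonempty},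
          {v | s.1.card ≠ 1 → φ * diam (v '' ↑s.1) ^ (s.1.card - 1)
            ≤ Real.sqrt ((gramMat (v ∘ faceEnum s)).det) * (simplexC (s.1.card - 1)).toReal}) := by
    ext v
    simp only [Kset, Set.mem_inter_iff, Set.mem_iInter, Set.mem_setOf_eq]
  rw [h0]
  refine IsClosed.inter (isClosed_eq (continuous_apply 0) continuous_const) ?_
  refine IsClosed.inter (isClosed_eq continuous_diam_range continuous_const) ?_
  apply isClosed_iInter
  intro s
  by_cases h1 : s.1.card = 1
  · have : {v : Fin (n + 1) → EuclideanSpace ℝ (Fin n) | s.1.card ≠ 1 →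
        φ * diam (v '' ↑s.1) ^ (s.1.card - 1)
          ≤ Real.sqrt ((gramMat (v ∘ faceEnum s)).det) * (simplexC (s.1.card - 1)).toReal}
        = Set.univ := by
      ext v; simp [h1]
    rw [this]
    exact isClosed_univ
  · have : {v : Fin (n + 1) → EuclideanSpace ℝ (Fin n) | s.1.card ≠ 1 →
        φ * diam (v '' ↑s.1) ^ (s.1.card - 1)
          ≤ Real.sqrt ((gramMat (v ∘ faceEnum s)).det) * (simplexC (s.1.card - 1)).toReal}
        = {v | φ * diam (v '' ↑s.1) ^ (s.1.card - 1)
          ≤ Real.sqrt ((gramMat (v ∘ faceEnum s)).det) * (simplexC (s.1.card - 1)).toReal} := by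
      ext v; simp [h1]
    rw [this]
    exact isClosed_le (continuous_const.mul ((continuous_diam_image s.1).pow _))
      ((continuous_sqrtdet s).mul continuous_const)

lemma isCompact_Kset (n : ℕ) (φ : ℝ) : IsCompact (Kset n φ) := by
  apply IsCompact.of_isClosed_subset (isCompact_closedBall (0 : Fin (n + 1) →
    EuclideanSpace ℝ (Fin n)) 1) (isClosed_Kset n φ)
  intro v hv
  rw [mem_closedBall]
  rw [dist_pi_le_iff (by norm_num : (0:ℝ) ≤ 1)]
  intro i
  have : dist (v i) ((0 : Fin (n + 1) → EuclideanSpace ℝ (Fin n)) i) = dist (v i) (v 0) := by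
    rw [hv.1]; rfl
  rw [this]
  calc dist (v i) (v 0) ≤ diam (Set.range v) :=
        dist_le_diam_of_mem (Set.finite_range v).isBounded ⟨i, rfl⟩ ⟨0, rfl⟩
    _ = 1 := hv.2.1

def Wset (n : ℕ) (φ : ℝ) : Set (Fin (n + 1) → EuclideanSpace ℝ (Fin n)) :=
  {v | (∀ i j : Fin (n + 1), i ≠ j → v i ≠ v j) ∧
    ∀ s : {s : Finset (Fin (n + 1)) // s.Nonempty}, φ / 2 < faceVal s v}

lemma continuousAt_faceVal {n : ℕ} (s : {s : Finset (Fin (n + 1)) // s.Nonempty})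
    {v : Fin (n + 1) → EuclideanSpace ℝ (Fin n)} (hdv : ∀ i j, i ≠ j → v i ≠ v j) :
    ContinuousAt (faceVal s) v := by
  by_cases h1 : s.1.card = 1
  · have heq : (faceVal (n := n) s) = fun _ => (1 : ℝ) := funext fun w => if_pos h1
    rw [heq]
    exact continuousAt_const
  · have heq : (faceVal (n := n) s) = fun w =>
        Real.sqrt ((gramMat (w ∘ faceEnum s)).det) * (simplexC (s.1.card - 1)).toReal
          / diam (w '' ↑s.1) ^ (s.1.card - 1) := funext fun w => if_neg h1
    rw [heq]
    have hcard : 1 < s.1.card := by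
      have := s.2.card_pos
      omega
    obtain ⟨a, ha, b, hb, hab⟩ := Finset.one_lt_card.1 hcard
    have hdiam : 0 < diam (v '' ↑s.1) := by
      have h2 : 0 < dist (v a) (v b) := dist_pos.2 (hdv a b hab)
      exact h2.trans_le (dist_le_diam_of_mem ((s.1.finite_toSet.image v).isBounded)
        ⟨a, ha, rfl⟩ ⟨b, hb, rfl⟩)
    exact ContinuousAt.div
      (((continuous_sqrtdet s).mul continuous_const).continuousAt)
      (((continuous_diam_image s.1).pow _).continuousAt)
      (pow_ne_zero _ hdiam.ne')

lemma isOpen_Wset (n : ℕ) (φ : ℝ) : IsOpen (Wset n φ) := by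
  rw [isOpen_iff_mem_nhds]
  intro v hv
  have hD : IsOpen {w : Fin (n + 1) → EuclideanSpace ℝ (Fin n) | ∀ i j, i ≠ j → w i ≠ w j} := by
    have h0 : {w : Fin (n + 1) → EuclideanSpace ℝ (Fin n) | ∀ i j, i ≠ j → w i ≠ w j}
        = ⋂ i, ⋂ j, ⋂ (_ : i ≠ j), {w | w i ≠ w j} := by
      ext w; simp
    rw [h0]
    refine isOpen_iInter_of_finite fun i => isOpen_iInter_of_finite fun j =>
      isOpen_iInter_of_finite fun hij => ?_
    have : {w : Fin (n + 1) → EuclideanSpace ℝ (Fin n) | w i ≠ w j}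
        = (fun w : Fin (n + 1) → EuclideanSpace ℝ (Fin n) => (w i, w j)) ⁻¹'
            {p : EuclideanSpace ℝ (Fin n) × EuclideanSpace ℝ (Fin n) | p.1 = p.2}ᶜ := rfl
    rw [this]
    exact (isClosed_diagonal.isOpen_compl).preimage
      ((continuous_apply i).prodMk (continuous_apply j))
  have h2 : Wset n φ = {w : Fin (n + 1) → EuclideanSpace ℝ (Fin n) | ∀ i j, i ≠ j → w i ≠ w j}
      ∩ ⋂ s : {s : Finset (Fin (n + 1)) // s.Nonempty}, faceVal s ⁻¹' Set.Ioi (φ / 2) := by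
    ext w
    simp only [Wset, Set.mem_inter_iff, Set.mem_iInter, Set.mem_setOf_eq, Set.mem_preimage,
      Set.mem_Ioi]
  rw [h2]
  refine Filter.inter_mem (hD.mem_nhds hv.1) (Filter.iInter_mem.2 fun s => ?_)
  exact (continuousAt_faceVal s hv.1).preimage_mem_nhds (isOpen_Ioi.mem_nhds (hv.2 s))

lemma Kset_subset_Wset (n : ℕ) (hn : 0 < n) {φ : ℝ} (hφ : 0 < φ) (hφ1 : φ ≤ 1) :
    Kset n φ ⊆ Wset n φ := by
  intro v hv
  obtain ⟨hv0, hvd, hvs⟩ := hv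
  set st : {s : Finset (Fin (n + 1)) // s.Nonempty} :=
    ⟨Finset.univ, Finset.univ_nonempty⟩ with hst
  have hcardtop : st.1.card = n + 1 := by simp [hst]
  have hcardne : st.1.card ≠ 1 := by omega
  have hprod := hvs st hcardne
  rw [image_univ_coe, hvd, one_pow, mul_one] at hprod
  have hdet : (gramMat (v ∘ faceEnum st)).det ≠ 0 := by
    intro h0
    rw [h0, Real.sqrt_zero, zero_mul] at hprod
    linarith
  have hindep : AffineIndependent ℝ (v ∘ faceEnum st) := affineIndependent_of_gramMat _ hdet
  have hsurj : ∀ x : Fin (n + 1), ∃ a, faceEnum st a = x := by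
    intro x
    have hx : x ∈ Set.range (faceEnum st) := by
      rw [range_faceEnum]
      simp [hst]
    exact hx
  have hinj : ∀ i j : Fin (n + 1), i ≠ j → v i ≠ v j := by
    intro i j hij
    obtain ⟨a, ha⟩ := hsurj i
    obtain ⟨b, hb⟩ := hsurj j
    have hab : a ≠ b := fun h => hij (by rw [← ha, ← hb, h])
    have := hindep.injective.ne hab
    simpa [Function.comp, ha, hb] using this
  refine ⟨hinj, fun s => ?_⟩
  by_cases h1 : s.1.card = 1
  · rw [faceVal, if_pos h1]
    linarith
  · rw [faceVal, if_neg h1]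
    have hcard : 1 < s.1.card := by
      have := s.2.card_pos
      omega
    obtain ⟨a, ha, b, hb, hab⟩ := Finset.one_lt_card.1 hcard
    have hdiam : 0 < diam (v '' ↑s.1) := by
      have h2 : 0 < dist (v a) (v b) := dist_pos.2 (hinj a b hab)
      exact h2.trans_le (dist_le_diam_of_mem ((s.1.finite_toSet.image v).isBounded)
        ⟨a, ha, rfl⟩ ⟨b, hb, rfl⟩)
    have h3 := hvs s h1
    have h4 : φ ≤ Real.sqrt ((gramMat (v ∘ faceEnum s)).det) * (simplexC (s.1.card - 1)).toReal
        / diam (v '' ↑s.1) ^ (s.1.card - 1) := (le_div_iff₀ (pow_pos hdiam _)).2 h3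
    linarith

lemma exists_delta (n : ℕ) (hn : 0 < n) {φ : ℝ} (hφ : 0 < φ) (hφ1 : φ ≤ 1) :
    ∃ δ : ℝ, 0 < δ ∧ ∀ v ∈ Kset n φ, ∀ w, dist w v < δ → w ∈ Wset n φ := by
  obtain ⟨δ, hδpos, hδ⟩ := (isCompact_Kset n φ).exists_thickening_subset_open
    (isOpen_Wset n φ) (Kset_subset_Wset n hn hφ hφ1)
  exact ⟨δ, hδpos, fun v hv w hw => hδ (Metric.mem_thickening_iff.2 ⟨v, hv, hw⟩)⟩

/-- stability of fatness under perturbation of the vertices.  For every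
dimension `n` and `φ₀ > 0` there is `ε₀ = ε₀(n, φ₀) > 0` such that: if `σ` is an
`n`-simplex with vertices `v₀, …, v_n`, of fatness `≥ φ₀`, and `σ'` is obtained by
moving each vertex by a distance at most `ε·diam σ` with `ε ≤ ε₀`, then `σ'` is
nondegenerate and has fatness `≥ φ₀/2`. -/
theorem fatness_stable_under_perturbation (n : ℕ) (φ₀ : ℝ) (hφ₀ : 0 < φ₀) :
    ∃ ε₀ : ℝ, 0 < ε₀ ∧
      ∀ (v v' : Fin (n + 1) → EuclideanSpace ℝ (Fin n)),
        AffineIndependent ℝ v → φ₀ ≤ tupleFatness v →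
        ∀ ε : ℝ, 0 < ε → ε ≤ ε₀ →
        (∀ i, dist (v' i) (v i) ≤ ε * Metric.diam (Set.range v)) →
        AffineIndependent ℝ v' ∧ φ₀ / 2 ≤ tupleFatness v' := by
  rcases Nat.eq_zero_or_pos n with hn0 | hn
  · subst hn0
    refine ⟨1, one_pos, fun v v' hindep hfat ε hε hε₀ hper => ?_⟩
    have hφ1 : φ₀ ≤ 1 := by
      have h := tupleFatness_le (le_refl 0) v ⟨{0}, Finset.singleton_nonempty 0⟩
      rw [faceVal, if_pos (Finset.card_singleton 0)] at h
      linarith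
    constructor
    · haveI : Subsingleton (Fin (0 + 1)) := ⟨fun a b => Fin.ext (by omega)⟩
      exact affineIndependent_of_subsingleton ℝ v'
    · apply le_tupleFatness (le_refl 0)
      intro s
      have hcard : s.1.card = 1 := by
        have h1 := s.2.card_pos
        have h2 : s.1.card ≤ 1 := by
          have := Finset.card_le_card (Finset.subset_univ s.1)
          simpa using this
        omega
      rw [faceVal, if_pos hcard]
      linarith
  · set ψ := min φ₀ 1 with hψdef
    have hψ : 0 < ψ := lt_min hφ₀ one_pos
    have hψ1 : ψ ≤ 1 := min_le_right _ _
    obtain ⟨δ, hδpos, hδ⟩ := exists_delta n hn hψ hψ1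
    refine ⟨δ / 2, half_pos hδpos, fun v v' hindep hfat ε hε hε₀ hper => ?_⟩
    have hφ1 : φ₀ ≤ 1 := by
      have h := tupleFatness_le (le_refl n) v ⟨{0}, Finset.singleton_nonempty 0⟩
      rw [faceVal, if_pos (Finset.card_singleton 0)] at h
      linarith
    have hψφ : ψ = φ₀ := min_eq_left hφ1
    have hinjv : Function.Injective v := hindep.injective
    have h01 : (0 : Fin (n + 1)) ≠ 1 := by
      apply Fin.ne_of_val_ne
      simp [Fin.val_one']
      omega
    have hd : 0 < diam (Set.range v) := by
      have h1 : 0 < dist (v 0) (v 1) := dist_pos.2 fun h => h01 (hinjv h)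
      exact h1.trans_le (dist_le_diam_of_mem (Set.finite_range v).isBounded ⟨0, rfl⟩ ⟨1, rfl⟩)
    set d := diam (Set.range v) with hddef
    have hdinv : 0 < d⁻¹ := inv_pos.2 hd
    set vt := fun i => d⁻¹ • (v i - v 0) with hvt
    set wt := fun i => d⁻¹ • (v' i - v 0) with hwt
    have htinj : ∀ i j : Fin (n + 1), i ≠ j → vt i ≠ vt j := by
      intro i j hij h
      apply hinjv.ne hij
      have h2 : v i - v 0 = v j - v 0 := smul_right_injective _ hdinv.ne' h
      have := sub_left_injective h2
      exact sub_left_injective h2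
    have hfatt : tupleFatness vt = tupleFatness v := tupleFatness_scale (le_refl n) v hdinv (v 0)
    have hrange : Set.range vt = (fun x => d⁻¹ • (x - v 0)) '' Set.range v := by
      rw [← Set.range_comp]
      rfl
    have hK : vt ∈ Kset n ψ := by
      refine ⟨by simp [hvt], ?_, ?_⟩
      · rw [hrange, diam_scale d⁻¹ hdinv.le (v 0) _ (Set.finite_range v).isBounded, ← hddef,
          inv_mul_cancel₀ hd.ne']
      · intro s hcard1
        have hfs : ψ ≤ faceVal s vt := by
          calc ψ ≤ φ₀ := min_le_left _ _
            _ ≤ tupleFatness v := hfat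
            _ = tupleFatness vt := hfatt.symm
            _ ≤ faceVal s vt := tupleFatness_le (le_refl n) vt s
        have hcard : 1 < s.1.card := by
          have := s.2.card_pos
          omega
        obtain ⟨a, ha, b, hb, hab⟩ := Finset.one_lt_card.1 hcard
        have hdiam : 0 < diam (vt '' ↑s.1) := by
          have h2 : 0 < dist (vt a) (vt b) := dist_pos.2 (htinj a b hab)
          exact h2.trans_le (dist_le_diam_of_mem ((s.1.finite_toSet.image vt).isBounded)
            ⟨a, ha, rfl⟩ ⟨b, hb, rfl⟩)
        rw [faceVal, if_neg hcard1] at hfs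
        exact (le_div_iff₀ (pow_pos hdiam _)).1 hfs
    have hclose : dist wt vt < δ := by
      have h2 : dist wt vt ≤ δ / 2 := by
        rw [dist_pi_le_iff (half_pos hδpos).le]
        intro i
        have h3 : dist (wt i) (vt i) = d⁻¹ * dist (v' i) (v i) :=
          dist_scale d⁻¹ (v 0) (v' i) (v i) hdinv.le
        rw [h3]
        calc d⁻¹ * dist (v' i) (v i) ≤ d⁻¹ * (ε * d) := by
              apply mul_le_mul_of_nonneg_left (hper i) hdinv.le
          _ = ε := by field_simp
          _ ≤ δ / 2 := hε₀
      linarith [half_lt_self hδpos]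
    obtain ⟨hwinj, hwfv⟩ := hδ vt hK wt hclose
    have hfatw : tupleFatness v' = tupleFatness wt :=
      (tupleFatness_scale (le_refl n) v' hdinv (v 0)).symm
    constructor
    · -- affine independence of v'
      set st : {s : Finset (Fin (n + 1)) // s.Nonempty} :=
        ⟨Finset.univ, Finset.univ_nonempty⟩ with hst
      have hcardtop : st.1.card = n + 1 := by simp [hst]
      have hcardne : st.1.card ≠ 1 := by omega
      have h := hwfv st
      rw [faceVal, if_neg hcardne] at h
      have hnum : 0 < Real.sqrt ((gramMat (wt ∘ faceEnum st)).det)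
          * (simplexC (st.1.card - 1)).toReal := by
        by_contra hle
        push_neg at hle
        have h5 : Real.sqrt ((gramMat (wt ∘ faceEnum st)).det)
            * (simplexC (st.1.card - 1)).toReal / diam (wt '' ↑st.1) ^ (st.1.card - 1) ≤ 0 :=
          div_nonpos_of_nonpos_of_nonneg hle (by positivity)
        linarith
      have hdet : (gramMat (wt ∘ faceEnum st)).det ≠ 0 := by
        intro h0
        rw [h0, Real.sqrt_zero, zero_mul] at hnum
        exact lt_irrefl 0 hnum
      have hv'wt : ∀ i, v' i = d • (wt i - (-(d⁻¹ • v 0))) := by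
        intro i
        show v' i = d • (d⁻¹ • (v' i - v 0) - -(d⁻¹ • v 0))
        rw [sub_neg_eq_add, smul_add, smul_smul, smul_smul, mul_inv_cancel₀ hd.ne', one_smul,
          one_smul, sub_add_cancel]
      have hcomp : v' ∘ faceEnum st = fun a => d • ((wt ∘ faceEnum st) a - (-(d⁻¹ • v 0))) := by
        funext a
        exact hv'wt (faceEnum st a)
      have hdet' : (gramMat (v' ∘ faceEnum st)).det ≠ 0 := by
        rw [hcomp, gramMat_scale, Matrix.det_smul, Fintype.card_fin]
        apply mul_ne_zero _ hdet
        positivity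
      have haff : AffineIndependent ℝ (v' ∘ faceEnum st) := affineIndependent_of_gramMat _ hdet'
      have hbij : Function.Bijective (faceEnum st) := by
        constructor
        · exact Subtype.coe_injective.comp (Finset.orderIsoOfFin _ _).injective
        · intro x
          have hx : x ∈ Set.range (faceEnum st) := by
            rw [range_faceEnum]
            simp [hst]
          exact hx
      exact (affineIndependent_equiv (Equiv.ofBijective _ hbij)).1 haff
    · rw [hfatw, ← hψφ]
      apply le_tupleFatness (le_refl n)
      intro s
      exact (hwfv s).le
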